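/- arXiv:2002.01879 — 4 statements merged into one kernel-verified Lean document; each statement's English description precedes it below -/
import Mathlib

section
/- For every integer n ≥ 2, the maximum over θ_1, …, θ_n ∈ [0, 2π) of the product over 1 ≤ i < j ≤ n of |e^{iθ_i} − e^{iθ_j}|^2 equals n^n, and it is attained at the vertices of a regular n-gon θ_j = 2π(j−1)/n. -/
open Real Complex Finset

-- Lemma A: product of squared distances = |det vandermonde|^2
lemma lemA (n : ℕ) (z : Fin n → ℂ) :
    (∏ i : Fin n, ∏ j ∈ Finset.univ.filter (fun j => i < j),
        ‖z i - z j‖ ^ 2) = ‖(Matrix.vandermonde z).det‖ ^ 2 := by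
  rw [Matrix.det_vandermonde, norm_prod]
  rw [← Finset.prod_pow]
  refine Finset.prod_congr rfl fun i _ => ?_
  rw [norm_prod, ← Finset.prod_pow]
  have : Finset.Ioi i = Finset.univ.filter (fun j => i < j) := by
    ext j; simp
  rw [← this]
  exact Finset.prod_congr rfl fun j _ => by rw [norm_sub_rev]

-- |det V|^2 = det (V * Vᴴ)
lemma lemB {n : ℕ} (V : Matrix (Fin n) (Fin n) ℂ) :
    ((‖V.det‖ ^ 2 : ℝ) : ℂ) = (V * V.conjTranspose).det := by
  rw [Matrix.det_mul, Matrix.det_conjTranspose, Complex.sq_norm, ← Complex.mul_conj]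
  rfl

lemma trace_eq_sum_eig {m : Type*} [Fintype m] [DecidableEq m]
    {A : Matrix m m ℂ} (hA : A.IsHermitian) :
    A.trace = ∑ i, (hA.eigenvalues i : ℂ) := by
  conv_lhs => rw [hA.spectral_theorem]
  rw [← hA.spectral_theorem]
  exact hA.trace_eq_sum_eigenvalues

open scoped ComplexOrder in
lemma upper (n : ℕ) (hn : 2 ≤ n) (z : Fin n → ℂ) (hz : ∀ i, ‖z i‖ = 1) :
    ‖(Matrix.vandermonde z).det‖ ^ 2 ≤ (n : ℝ) ^ n := by
  have hn0 : (0:ℝ) < n := by positivity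
  set V := Matrix.vandermonde z with hV
  have hG : (V * V.conjTranspose).PosSemidef := Matrix.posSemidef_self_mul_conjTranspose V
  have hH := hG.1
  set lam := hH.eigenvalues with hlam
  have hnn : ∀ i, 0 ≤ lam i := hG.eigenvalues_nonneg
  have hdiag : ∀ i, (V * V.conjTranspose) i i = (n : ℂ) := by
    intro i
    rw [Matrix.mul_apply]
    have h1 : ∀ k, V i k * V.conjTranspose k i = 1 := by
      intro k
      rw [Matrix.conjTranspose_apply, star_def, Complex.mul_conj]
      norm_cast
      rw [Complex.normSq_eq_norm_sq]
      simp [hV, Matrix.vandermonde, map_pow, hz i]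
    simp only [Matrix.conjTranspose_apply, star_def] at h1
    simp [h1]
  have htr : (V * V.conjTranspose).trace = (n : ℂ) * n := by
    rw [Matrix.trace]
    simp [Matrix.diag, hdiag]
  have hsum : ∑ i, lam i = (n:ℝ) * n := by
    have h2 := trace_eq_sum_eig hH
    rw [htr] at h2
    exact_mod_cast h2.symm
  have hprod : ‖V.det‖ ^ 2 = ∏ i, lam i := by
    have h3 := lemB V
    rw [hH.det_eq_prod_eigenvalues] at h3
    rw [hlam]
    have h4 : ((‖V.det‖ ^ 2 : ℝ) : ℂ) = ∏ i, ((hH.eigenvalues i : ℝ) : ℂ) := h3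
    exact_mod_cast h4
  rw [hprod]
  have hgm := Real.geom_mean_le_arith_mean_weighted Finset.univ (fun _ => 1/(n:ℝ)) lam
    (fun i _ => by positivity) (by simp; field_simp) (fun i _ => hnn i)
  have hgm2 : ∑ i : Fin n, 1/(n:ℝ) * lam i = n := by
    rw [← Finset.mul_sum, hsum]; field_simp
  rw [hgm2] at hgm
  calc ∏ i, lam i = (∏ i, lam i ^ (1/(n:ℝ)))^n := by
        rw [← Finset.prod_pow]
        refine Finset.prod_congr rfl fun i _ => ?_
        rw [← Real.rpow_natCast (lam i ^ (1/(n:ℝ))) n, ← Real.rpow_mul (hnn i)]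
        rw [one_div, inv_mul_cancel₀ (by positivity), Real.rpow_one]
    _ ≤ (n:ℝ)^n := pow_le_pow_left₀ (Finset.prod_nonneg fun i _ => Real.rpow_nonneg (hnn i) _) hgm n

lemma eq_part (n : ℕ) (hn : 2 ≤ n) :
    ‖(Matrix.vandermonde
      (fun j : Fin n => Complex.exp ((2 * π * j / n : ℝ) * Complex.I))).det‖ ^ 2 = (n:ℝ)^n := by
  have hn0 : (n : ℂ) ≠ 0 := Nat.cast_ne_zero.mpr (by omega)
  set ζ := Complex.exp (2 * π * Complex.I / n) with hζdef
  have hζ : IsPrimitiveRoot ζ n := Complex.isPrimitiveRoot_exp n (by omega)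
  have hzeq : ∀ j : Fin n, Complex.exp (((2 * π * j / n : ℝ) : ℂ) * Complex.I) = ζ ^ (j:ℕ) := by
    intro j
    rw [hζdef, ← Complex.exp_nat_mul]
    congr 1
    push_cast
    ring
  set z : Fin n → ℂ := fun j => Complex.exp ((2 * π * j / n : ℝ) * Complex.I) with hz
  set V := Matrix.vandermonde z with hV
  have habs : ∀ j, ‖z j‖ = 1 := by
    intro j
    rw [hz]
    simp [Complex.norm_exp]
  have hG : V * V.conjTranspose = Matrix.diagonal (fun _ => (n:ℂ)) := by
    ext i j
    rw [Matrix.mul_apply]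
    by_cases hij : i = j
    · subst hij
      have h1 : ∀ k : Fin n, V i k * V.conjTranspose k i = 1 := by
        intro k
        rw [Matrix.conjTranspose_apply, star_def, Complex.mul_conj]
        norm_cast
        rw [Complex.normSq_eq_norm_sq]
        simp [hV, Matrix.vandermonde, map_pow, habs i]
      simp only [Matrix.conjTranspose_apply, star_def] at h1
      simp [h1]
    · have habsz : ‖ζ‖ = 1 := by rw [hζdef]; simp [Complex.norm_exp]
      have hwn : (z i * (starRingEnd ℂ) (z j)) ^ n = 1 := by
        rw [hz]
        simp only [hzeq]
        rw [mul_pow, ← map_pow, ← pow_mul, ← pow_mul, mul_comm (i:ℕ) n, mul_comm (j:ℕ) n,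
          pow_mul, pow_mul, hζ.pow_eq_one, one_pow, one_pow, map_one, mul_one]
      have hw1 : z i * (starRingEnd ℂ) (z j) ≠ 1 := by
        rw [hz]
        simp only [hzeq]
        have hζne : ζ ≠ 0 := Complex.exp_ne_zero _
        rw [← Complex.inv_eq_conj (by rw [norm_pow, habsz, one_pow])]
        intro h
        rw [mul_inv_eq_one₀ (pow_ne_zero (j:ℕ) hζne)] at h
        exact hij (Fin.ext (hζ.pow_inj i.isLt j.isLt h))
      have hsum : ∀ k : Fin n, V i k * V.conjTranspose k j
          = (z i * (starRingEnd ℂ) (z j)) ^ (k:ℕ) := by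
        intro k
        rw [Matrix.conjTranspose_apply, star_def]
        simp [hV, Matrix.vandermonde, mul_pow, ← map_pow]
      rw [Finset.sum_congr rfl fun k _ => hsum k, Fin.sum_univ_eq_sum_range]
      rw [geom_sum_eq hw1, hwn, sub_self, zero_div, Matrix.diagonal_apply_ne _ hij]
  have h3 := lemB V
  rw [hG, Matrix.det_diagonal, Finset.prod_const, Finset.card_univ, Fintype.card_fin] at h3
  have h4 : ((‖V.det‖ ^ 2 : ℝ) : ℂ) = (((n:ℝ)^n : ℝ) : ℂ) := by
    rw [h3]; push_cast; ring
  exact_mod_cast h4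

theorem vandermonde_max_on_circle (n : ℕ) (hn : 2 ≤ n) :
    IsGreatest
      { x : ℝ | ∃ θ : Fin n → ℝ, (∀ j, θ j ∈ Set.Ico 0 (2 * π)) ∧
          x = ∏ i : Fin n, ∏ j ∈ Finset.univ.filter (fun j => i < j),
                ‖Complex.exp (θ i * Complex.I) - Complex.exp (θ j * Complex.I)‖ ^ 2 }
      ((n : ℝ) ^ n) ∧
    (∏ i : Fin n, ∏ j ∈ Finset.univ.filter (fun j => i < j),
        ‖Complex.exp ((2 * π * i / n : ℝ) * Complex.I)
          - Complex.exp ((2 * π * j / n : ℝ) * Complex.I)‖ ^ 2) = (n : ℝ) ^ n := by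
  have hπ : 0 < π := Real.pi_pos
  have hn0 : (0:ℝ) < n := by positivity
  have key : (∏ i : Fin n, ∏ j ∈ Finset.univ.filter (fun j => i < j),
      ‖Complex.exp ((2 * π * i / n : ℝ) * Complex.I)
        - Complex.exp ((2 * π * j / n : ℝ) * Complex.I)‖ ^ 2) = (n : ℝ) ^ n := by
    rw [lemA n (fun j : Fin n => Complex.exp ((2 * π * j / n : ℝ) * Complex.I))]
    exact eq_part n hn
  refine ⟨⟨⟨fun j => 2 * π * j / n, fun j => ?_, key.symm⟩, ?_⟩, key⟩
  · constructor
    · positivity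
    · rw [div_lt_iff₀ hn0]
      have : (j:ℝ) < n := by exact_mod_cast j.isLt
      nlinarith
  · rintro x ⟨θ, hθ, rfl⟩
    rw [lemA n (fun j => Complex.exp (θ j * Complex.I))]
    exact upper n hn _ fun i => by simp [Complex.norm_exp]
end

section
/- For every u ∈ [−π, π] with u ≠ 0 and every α > 0, one has 1 + (sinh(αu/2)/sin(u/2))^2 ≤ exp((πα/2)^2). -/
open Real

lemma convexOn_sinh_Ici : ConvexOn ℝ (Set.Ici (0:ℝ)) Real.sinh := by
  apply convexOn_of_deriv2_nonneg (convex_Ici 0)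
    Real.continuous_sinh.continuousOn
    Real.differentiable_sinh.differentiableOn
  · rw [Real.deriv_sinh]
    exact Real.differentiable_cosh.differentiableOn
  · intro x hx
    rw [interior_Ici] at hx
    simp only [Function.iterate_succ, Function.iterate_zero, Function.comp_apply, id_eq]
    rw [Real.deriv_sinh, Real.deriv_cosh]
    exact (Real.sinh_pos_iff.2 hx).le

lemma sinh_mul_le {c y : ℝ} (hc : 0 ≤ c) (hy0 : 0 ≤ y) (hy1 : y ≤ 1) :
    Real.sinh (y * c) ≤ y * Real.sinh c := by
  have h := convexOn_sinh_Ici.2 (Set.self_mem_Ici) (Set.mem_Ici.2 hc)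
    (by linarith : (0:ℝ) ≤ 1 - y) hy0 (by ring)
  simpa [Real.sinh_zero] using h

lemma sinh_over_sin_bound_pos (u : ℝ) (hpos : 0 < u) (h2 : u ≤ π) (α : ℝ)
    (hα : 0 < α) :
    1 + (Real.sinh (α * u / 2) / Real.sin (u / 2)) ^ 2 ≤ Real.exp ((π * α / 2) ^ 2) := by
  have hπ := Real.pi_pos
  -- sin (u/2) ≥ u/π > 0
  have hsin : u / π ≤ Real.sin (u / 2) := by
    have := Real.mul_le_sin (x := u / 2) (by linarith) (by linarith)
    calc u / π = 2 / π * (u / 2) := by field_simp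
    _ ≤ Real.sin (u / 2) := this
  have huπ : 0 < u / π := div_pos hpos hπ
  have hsinpos : 0 < Real.sin (u / 2) := lt_of_lt_of_le huπ hsin
  -- sinh (α u / 2) ≥ 0
  have hx : 0 ≤ α * u / 2 := by positivity
  have hsinh : 0 ≤ Real.sinh (α * u / 2) := Real.sinh_nonneg_iff.2 hx
  -- step 1: divide by u/π instead of sin(u/2)
  have step1 : Real.sinh (α * u / 2) / Real.sin (u / 2) ≤ Real.sinh (α * u / 2) / (u / π) :=
    div_le_div_of_nonneg_left hsinh huπ hsin
  -- step 2: sinh(α u /2) = sinh((u/π) * (π α /2)) ≤ (u/π) * sinh(π α /2)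
  have hy1 : u / π ≤ 1 := by
    rw [div_le_one hπ]; exact h2
  have step2 : Real.sinh (α * u / 2) ≤ (u / π) * Real.sinh (π * α / 2) := by
    have : α * u / 2 = (u / π) * (π * α / 2) := by field_simp
    rw [this]
    exact sinh_mul_le (by positivity) huπ.le hy1
  have key : Real.sinh (α * u / 2) / Real.sin (u / 2) ≤ Real.sinh (π * α / 2) := by
    refine step1.trans ?_
    rw [div_le_iff₀ huπ]
    linarith [step2]
  -- conclude: 1 + sinh² (πα/2) = cosh²(πα/2) ≤ exp((πα/2)²)
  have hnn : 0 ≤ Real.sinh (α * u / 2) / Real.sin (u / 2) := div_nonneg hsinh hsinpos.le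
  have hsq : (Real.sinh (α * u / 2) / Real.sin (u / 2)) ^ 2 ≤ Real.sinh (π * α / 2) ^ 2 :=
    pow_le_pow_left₀ hnn key 2
  have hcosh : Real.cosh (π * α / 2) ≤ Real.exp ((π * α / 2) ^ 2 / 2) :=
    Real.cosh_le_exp_half_sq _
  have hcosh2 : Real.cosh (π * α / 2) ^ 2 ≤ Real.exp ((π * α / 2) ^ 2) := by
    calc Real.cosh (π * α / 2) ^ 2 ≤ Real.exp ((π * α / 2) ^ 2 / 2) ^ 2 :=
          pow_le_pow_left₀ (Real.cosh_pos _).le hcosh 2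
    _ = Real.exp ((π * α / 2) ^ 2) := by
          rw [← Real.exp_nat_mul]; ring_nf
  calc 1 + (Real.sinh (α * u / 2) / Real.sin (u / 2)) ^ 2
      ≤ 1 + Real.sinh (π * α / 2) ^ 2 := by linarith
  _ = Real.cosh (π * α / 2) ^ 2 := (Real.cosh_sq' _).symm
  _ ≤ Real.exp ((π * α / 2) ^ 2) := hcosh2

theorem sinh_over_sin_bound (u : ℝ) (hu : u ∈ Set.Icc (-π) π) (hu0 : u ≠ 0) (α : ℝ)
    (hα : 0 < α) :
    1 + (Real.sinh (α * u / 2) / Real.sin (u / 2)) ^ 2 ≤ Real.exp ((π * α / 2) ^ 2) := by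
  obtain ⟨h1, h2⟩ := hu
  rcases lt_or_gt_of_ne hu0 with hneg | hpos
  · have h := sinh_over_sin_bound_pos (-u) (by linarith) (by linarith) α hα
    simpa [neg_div, mul_neg, Real.sinh_neg, Real.sin_neg, div_neg] using h
  · exact sinh_over_sin_bound_pos u hpos h2 α hα
end

section
/- For m ≥ 1 and ζ_1, …, ζ_m ∈ ℂ with ∑ |ζ_ℓ|² = ‖ξ‖², define B_{p0} = ∑_{1≤k≤ℓ≤m} (1_{1≤k−p≤ℓ−p≤m} + 1_{1≤k≤ℓ−p≤m}) ζ_ℓ ζ_{p−ℓ} / √(ℓ(ℓ−p)), where ζ_{−j} = conj(ζ_j). Then B_{00} = 2‖ξ‖² and ∑_{p=1}^{m−1} p (|B_{p0}|² + |B_{−p,0}|²) ≤ (4 m³ / 3) ‖ξ‖⁴. -/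
open Finset

/-- Per-`l` bound on the inner sum over `k`. -/
lemma B_inner_bound (m : ℕ) (ζ : ℤ → ℂ)
    (hconj : ∀ j : ℤ, ζ (-j) = starRingEnd ℂ (ζ j)) (p l : ℤ)
    (hl1 : 1 ≤ l) (hlm : l ≤ (m : ℤ)) :
    ‖∑ k ∈ Finset.Icc (1 : ℤ) l,
      (((if 1 ≤ k - p ∧ k - p ≤ l - p ∧ l - p ≤ (m : ℤ) then (1 : ℂ) else 0) +
          (if 1 ≤ k ∧ k ≤ l - p ∧ l - p ≤ (m : ℤ) then (1 : ℂ) else 0)) *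
        ζ l * ζ (p - l) / (Real.sqrt ((l * (l - p) : ℤ)) : ℝ))‖
    ≤ if 1 ≤ l - p ∧ l - p ≤ (m : ℤ) then
        ‖ζ l‖ ^ 2 + ‖ζ (l - p)‖ ^ 2 else 0 := by
  by_cases hc : 1 ≤ l - p ∧ l - p ≤ (m : ℤ)
  · rw [if_pos hc]
    have hrw : ∀ k ∈ Finset.Icc (1 : ℤ) l,
        (((if 1 ≤ k - p ∧ k - p ≤ l - p ∧ l - p ≤ (m : ℤ) then (1 : ℂ) else 0) +
            (if 1 ≤ k ∧ k ≤ l - p ∧ l - p ≤ (m : ℤ) then (1 : ℂ) else 0)) *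
          ζ l * ζ (p - l) / (Real.sqrt ((l * (l - p) : ℤ)) : ℝ))
        = ((if 1 ≤ k - p ∧ k - p ≤ l - p ∧ l - p ≤ (m : ℤ) then (1 : ℂ) else 0) +
            (if 1 ≤ k ∧ k ≤ l - p ∧ l - p ≤ (m : ℤ) then (1 : ℂ) else 0)) *
          (ζ l * ζ (p - l) / (Real.sqrt ((l * (l - p) : ℤ)) : ℝ)) := by
      intro k _; ring
    rw [Finset.sum_congr rfl hrw, ← Finset.sum_mul]
    set n : ℤ := l - max p 0 with hn
    have hn1 : 1 ≤ n := by omega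
    have hnl : n ≤ l := by omega
    have hnlp : n ≤ l - p := by omega
    have hN : (∑ k ∈ Finset.Icc (1 : ℤ) l,
        ((if 1 ≤ k - p ∧ k - p ≤ l - p ∧ l - p ≤ (m : ℤ) then (1 : ℂ) else 0) +
          (if 1 ≤ k ∧ k ≤ l - p ∧ l - p ≤ (m : ℤ) then (1 : ℂ) else 0)))
        = 2 * (n : ℂ) := by
      rw [Finset.sum_add_distrib, Finset.sum_boole, Finset.sum_boole]
      have e1 : (Finset.Icc (1 : ℤ) l).filter
          (fun k => 1 ≤ k - p ∧ k - p ≤ l - p ∧ l - p ≤ (m : ℤ))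
          = Finset.Icc (max (p + 1) 1) l := by
        ext k; simp only [Finset.mem_filter, Finset.mem_Icc]; omega
      have e2 : (Finset.Icc (1 : ℤ) l).filter
          (fun k => 1 ≤ k ∧ k ≤ l - p ∧ l - p ≤ (m : ℤ))
          = Finset.Icc (1 : ℤ) n := by
        ext k; simp only [Finset.mem_filter, Finset.mem_Icc]; omega
      rw [e1, e2, Int.card_Icc, Int.card_Icc]
      have c1 : (l + 1 - max (p + 1) 1).toNat = n.toNat := by omega
      have c2 : (n + 1 - 1).toNat = n.toNat := by omega
      rw [c1, c2]
      have : ((n.toNat : ℤ) : ℂ) = (n : ℂ) := by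
        rw [Int.toNat_of_nonneg (by omega)]
      push_cast at this ⊢
      rw [this]; ring
    rw [hN]
    have hpl : ζ (p - l) = starRingEnd ℂ (ζ (l - p)) := by
      rw [show p - l = -(l - p) by ring, hconj]
    rw [hpl]
    set s : ℝ := Real.sqrt ((l * (l - p) : ℤ)) with hs
    have hns : (n : ℝ) ≤ s := by
      rw [hs]
      rw [show ((l * (l - p) : ℤ) : ℝ) = (l : ℝ) * ((l : ℝ) - (p : ℝ)) by push_cast; ring]
      have h1 : (n : ℝ) ^ 2 ≤ (l : ℝ) * ((l : ℝ) - (p : ℝ)) := by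
        have hA : (n : ℝ) ≤ (l : ℝ) := by exact_mod_cast hnl
        have h2 : ((n : ℤ) : ℝ) ≤ ((l - p : ℤ) : ℝ) := by exact_mod_cast hnlp
        push_cast at h2
        nlinarith [(by exact_mod_cast hn1 : (1 : ℝ) ≤ (n : ℝ))]
      nlinarith [Real.sq_sqrt (by nlinarith [(by exact_mod_cast hn1 : (1:ℝ) ≤ (n:ℝ))] : (0:ℝ) ≤ (l : ℝ) * ((l : ℝ) - (p : ℝ))),
        Real.sqrt_nonneg ((l : ℝ) * ((l : ℝ) - (p : ℝ))),
        (by exact_mod_cast hn1 : (1 : ℝ) ≤ (n : ℝ))]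
    have hspos : 0 < s := lt_of_lt_of_le (by exact_mod_cast hn1) hns
    set a : ℝ := ‖ζ l‖
    set b : ℝ := ‖ζ (l - p)‖
    have ha : 0 ≤ a := norm_nonneg _
    have hb : 0 ≤ b := norm_nonneg _
    have hn0R : (0 : ℝ) ≤ (n : ℝ) := by exact_mod_cast (by omega : (0 : ℤ) ≤ n)
    have habs : ‖2 * (n : ℂ) * (ζ l * starRingEnd ℂ (ζ (l - p)) / (s : ℂ))‖
        = 2 * (n : ℝ) * (a * b / s) := by
      rw [norm_mul, norm_mul, norm_div, norm_mul]
      simp only [Complex.norm_two, Complex.norm_intCast, Complex.norm_real, Complex.norm_conj, Real.norm_eq_abs]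
      rw [abs_of_nonneg hn0R, abs_of_nonneg hspos.le]
    rw [habs]
    have key : 2 * (n : ℝ) * (a * b / s) ≤ 2 * (a * b) := by
      have hab : 0 ≤ a * b := mul_nonneg ha hb
      calc 2 * (n : ℝ) * (a * b / s) = 2 * ((n : ℝ) * (a * b)) / s := by ring
        _ ≤ 2 * (s * (a * b)) / s := by gcongr
        _ = 2 * (a * b) := by
            rw [mul_comm s (a * b), ← mul_assoc, mul_div_assoc, div_self hspos.ne', mul_one]
    nlinarith [sq_nonneg (a - b)]
  · rw [if_neg hc]
    have hz : ∀ k ∈ Finset.Icc (1 : ℤ) l,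
        (((if 1 ≤ k - p ∧ k - p ≤ l - p ∧ l - p ≤ (m : ℤ) then (1 : ℂ) else 0) +
            (if 1 ≤ k ∧ k ≤ l - p ∧ l - p ≤ (m : ℤ) then (1 : ℂ) else 0)) *
          ζ l * ζ (p - l) / (Real.sqrt ((l * (l - p) : ℤ)) : ℝ)) = 0 := by
      intro k hk
      rw [Finset.mem_Icc] at hk
      rw [if_neg (by omega), if_neg (by omega)]
      simp
    rw [Finset.sum_eq_zero hz]
    simp

theorem B_coefficients_bound (m : ℕ) (hm : 1 ≤ m) (ζ : ℤ → ℂ)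
    (hconj : ∀ j : ℤ, ζ (-j) = starRingEnd ℂ (ζ j)) (r : ℝ) (hr : 0 ≤ r)
    (hsum : ∑ l ∈ Finset.Icc (1 : ℤ) m, ‖ζ l‖ ^ 2 = r ^ 2)
    (B : ℤ → ℂ)
    (hB : ∀ p : ℤ, B p =
        ∑ l ∈ Finset.Icc (1 : ℤ) m, ∑ k ∈ Finset.Icc (1 : ℤ) l,
          (((if 1 ≤ k - p ∧ k - p ≤ l - p ∧ l - p ≤ (m : ℤ) then (1 : ℂ) else 0) +
              (if 1 ≤ k ∧ k ≤ l - p ∧ l - p ≤ (m : ℤ) then (1 : ℂ) else 0)) *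
            ζ l * ζ (p - l) / (Real.sqrt ((l * (l - p) : ℤ)) : ℝ))) :
    B 0 = ((2 * r ^ 2 : ℝ) : ℂ) ∧
      ∑ p ∈ Finset.Icc (1 : ℤ) ((m : ℤ) - 1),
          (p : ℝ) * (‖B p‖ ^ 2 + ‖B (-p)‖ ^ 2)
        ≤ 4 * (m : ℝ) ^ 3 / 3 * r ^ 4 := by
  constructor
  · -- B 0 = 2 r ^ 2
    rw [hB 0]
    have hl : ∀ l ∈ Finset.Icc (1 : ℤ) (m : ℤ),
        (∑ k ∈ Finset.Icc (1 : ℤ) l,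
          (((if 1 ≤ k - 0 ∧ k - 0 ≤ l - 0 ∧ l - 0 ≤ (m : ℤ) then (1 : ℂ) else 0) +
              (if 1 ≤ k ∧ k ≤ l - 0 ∧ l - 0 ≤ (m : ℤ) then (1 : ℂ) else 0)) *
            ζ l * ζ (0 - l) / (Real.sqrt ((l * (l - 0) : ℤ)) : ℝ)))
        = ((2 * ‖ζ l‖ ^ 2 : ℝ) : ℂ) := by
      intro l hl
      rw [Finset.mem_Icc] at hl
      have hl0 : (0 : ℝ) ≤ (l : ℝ) := by exact_mod_cast (show (0 : ℤ) ≤ l by omega)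
      have hsq : Real.sqrt ((l * (l - 0) : ℤ)) = (l : ℝ) := by
        rw [show ((l * (l - 0) : ℤ) : ℝ) = (l : ℝ) ^ 2 by push_cast; ring]
        exact Real.sqrt_sq hl0
      have hrw : ∀ k ∈ Finset.Icc (1 : ℤ) l,
          (((if 1 ≤ k - 0 ∧ k - 0 ≤ l - 0 ∧ l - 0 ≤ (m : ℤ) then (1 : ℂ) else 0) +
              (if 1 ≤ k ∧ k ≤ l - 0 ∧ l - 0 ≤ (m : ℤ) then (1 : ℂ) else 0)) *
            ζ l * ζ (0 - l) / (Real.sqrt ((l * (l - 0) : ℤ)) : ℝ))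
          = 2 * (ζ l * ζ (-l)) / ((l : ℝ) : ℂ) := by
        intro k hk
        rw [Finset.mem_Icc] at hk
        rw [if_pos (by omega), if_pos (by omega), hsq, show (0 : ℤ) - l = -l by ring]
        ring
      rw [Finset.sum_congr rfl hrw, Finset.sum_const, Int.card_Icc, nsmul_eq_mul]
      have hcastl : (((l + 1 - 1).toNat : ℕ) : ℂ) = (l : ℂ) := by
        have h1 : ((l + 1 - 1).toNat : ℤ) = l := by omega
        exact_mod_cast congrArg (Int.cast : ℤ → ℂ) h1
      rw [hcastl, hconj l, Complex.mul_conj]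
      have hlne : (l : ℂ) ≠ 0 := by
        exact_mod_cast (by omega : (l : ℤ) ≠ 0)
      have : ((l : ℝ) : ℂ) = (l : ℂ) := by push_cast; ring
      rw [this]
      rw [show (Complex.normSq (ζ l) : ℂ) = ((‖ζ l‖ ^ 2 : ℝ) : ℂ) by
        rw [Complex.sq_norm]]
      field_simp
      push_cast; ring
    rw [Finset.sum_congr rfl hl]
    rw [← Complex.ofReal_sum]
    congr 1
    rw [← Finset.mul_sum, hsum]
  · -- the sum bound
    have habs : ∀ p : ℤ, ‖B p‖ ≤ 2 * r ^ 2 := by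
      intro p
      rw [hB p]
      calc ‖∑ l ∈ Finset.Icc (1 : ℤ) m, ∑ k ∈ Finset.Icc (1 : ℤ) l,
            (((if 1 ≤ k - p ∧ k - p ≤ l - p ∧ l - p ≤ (m : ℤ) then (1 : ℂ) else 0) +
                (if 1 ≤ k ∧ k ≤ l - p ∧ l - p ≤ (m : ℤ) then (1 : ℂ) else 0)) *
              ζ l * ζ (p - l) / (Real.sqrt ((l * (l - p) : ℤ)) : ℝ))‖
          ≤ ∑ l ∈ Finset.Icc (1 : ℤ) m, ‖∑ k ∈ Finset.Icc (1 : ℤ) l,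
            (((if 1 ≤ k - p ∧ k - p ≤ l - p ∧ l - p ≤ (m : ℤ) then (1 : ℂ) else 0) +
                (if 1 ≤ k ∧ k ≤ l - p ∧ l - p ≤ (m : ℤ) then (1 : ℂ) else 0)) *
              ζ l * ζ (p - l) / (Real.sqrt ((l * (l - p) : ℤ)) : ℝ))‖ :=
            norm_sum_le _ _
        _ ≤ ∑ l ∈ Finset.Icc (1 : ℤ) m,
              (if 1 ≤ l - p ∧ l - p ≤ (m : ℤ) then
                ‖ζ l‖ ^ 2 + ‖ζ (l - p)‖ ^ 2 else 0) := by
            apply Finset.sum_le_sum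
            intro l hl
            rw [Finset.mem_Icc] at hl
            exact B_inner_bound m ζ hconj p l hl.1 hl.2
        _ ≤ r ^ 2 + r ^ 2 := by
            have hsplit : ∀ l : ℤ,
                (if 1 ≤ l - p ∧ l - p ≤ (m : ℤ) then
                  ‖ζ l‖ ^ 2 + ‖ζ (l - p)‖ ^ 2 else 0)
                = (if 1 ≤ l - p ∧ l - p ≤ (m : ℤ) then ‖ζ l‖ ^ 2 else 0)
                  + (if 1 ≤ l - p ∧ l - p ≤ (m : ℤ) then ‖ζ (l - p)‖ ^ 2 else 0) := by
              intro l; split <;> simp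
            rw [Finset.sum_congr rfl (fun l _ => hsplit l), Finset.sum_add_distrib]
            apply add_le_add
            · calc ∑ l ∈ Finset.Icc (1 : ℤ) m,
                  (if 1 ≤ l - p ∧ l - p ≤ (m : ℤ) then ‖ζ l‖ ^ 2 else 0)
                  ≤ ∑ l ∈ Finset.Icc (1 : ℤ) m, ‖ζ l‖ ^ 2 := by
                    apply Finset.sum_le_sum
                    intro l _
                    split
                    · exact le_refl _
                    · positivity
                _ = r ^ 2 := hsum
            · rw [← Finset.sum_filter]
              have himg : ∑ l ∈ (Finset.Icc (1 : ℤ) m).filter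
                    (fun l => 1 ≤ l - p ∧ l - p ≤ (m : ℤ)), ‖ζ (l - p)‖ ^ 2
                  = ∑ j ∈ ((Finset.Icc (1 : ℤ) m).filter
                    (fun l => 1 ≤ l - p ∧ l - p ≤ (m : ℤ))).image (fun l => l - p),
                      ‖ζ j‖ ^ 2 := by
                rw [Finset.sum_image]
                intro x _ y _ h
                simp only at h
                omega
              rw [himg, ← hsum]
              apply Finset.sum_le_sum_of_subset_of_nonneg
              · intro j hj
                simp only [Finset.mem_image, Finset.mem_filter, Finset.mem_Icc] at hj
                obtain ⟨l, ⟨_, h1, h2⟩, rfl⟩ := hj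
                rw [Finset.mem_Icc]
                exact ⟨h1, h2⟩
              · intro _ _ _; positivity
        _ = 2 * r ^ 2 := by ring
    have hterm : ∀ p ∈ Finset.Icc (1 : ℤ) ((m : ℤ) - 1),
        (p : ℝ) * (‖B p‖ ^ 2 + ‖B (-p)‖ ^ 2)
        ≤ (p : ℝ) * (8 * r ^ 4) := by
      intro p hp
      rw [Finset.mem_Icc] at hp
      have hp0 : (0 : ℝ) ≤ (p : ℝ) := by exact_mod_cast (show (0 : ℤ) ≤ p by omega)
      apply mul_le_mul_of_nonneg_left ?_ hp0
      have h1 := habs p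
      have h2 := habs (-p)
      have hn1 : (0 : ℝ) ≤ ‖B p‖ := norm_nonneg _
      have hn2 : (0 : ℝ) ≤ ‖B (-p)‖ := norm_nonneg _
      nlinarith [sq_nonneg r]
    calc ∑ p ∈ Finset.Icc (1 : ℤ) ((m : ℤ) - 1),
          (p : ℝ) * (‖B p‖ ^ 2 + ‖B (-p)‖ ^ 2)
        ≤ ∑ p ∈ Finset.Icc (1 : ℤ) ((m : ℤ) - 1), (p : ℝ) * (8 * r ^ 4) :=
          Finset.sum_le_sum hterm
      _ ≤ ∑ p ∈ Finset.Icc (1 : ℤ) ((m : ℤ) - 1), ((m : ℝ) - 1) * (8 * r ^ 4) := by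
          apply Finset.sum_le_sum
          intro p hp
          rw [Finset.mem_Icc] at hp
          apply mul_le_mul_of_nonneg_right ?_ (by positivity)
          have : (p : ℝ) ≤ ((m : ℤ) - 1 : ℤ) := by exact_mod_cast hp.2
          push_cast at this ⊢
          linarith
      _ ≤ 4 * (m : ℝ) ^ 3 / 3 * r ^ 4 := by
          rw [Finset.sum_const, Int.card_Icc, nsmul_eq_mul]
          have hcard : ((((m : ℤ) - 1 + 1 - 1).toNat : ℕ) : ℝ) = (m : ℝ) - 1 := by
            have h1 : (((m : ℤ) - 1 + 1 - 1).toNat : ℤ) = (m : ℤ) - 1 := by omega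
            have := congrArg (Int.cast : ℤ → ℝ) h1
            push_cast at this
            linarith [this]
          rw [hcard]
          have hm1 : (1 : ℝ) ≤ (m : ℝ) := by exact_mod_cast hm
          have hr4 : (0 : ℝ) ≤ r ^ 4 := by positivity
          have h1 : (0 : ℝ) ≤ ((m : ℝ) - 1) * ((m : ℝ) - 3) ^ 2 * r ^ 4 := by
            apply mul_nonneg (mul_nonneg (by linarith) (sq_nonneg _)) hr4
          have h2 : (0 : ℝ) ≤ (2 * (m : ℝ) - 3) ^ 2 * r ^ 4 :=
            mul_nonneg (sq_nonneg _) hr4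
          nlinarith [h1, h2, hr4]
end

section
/- For m ≥ 1 and ζ_1, …, ζ_m ∈ ℂ with ∑ |ζ_ℓ|² = ‖ξ‖², define the (2m−1)×(2m−1) matrix A by A_{pq} = ∑_{1≤k≤ℓ≤m} (1_{1≤p−k+1≤p+q−ℓ≤m} + 1_{1≤q−k+1≤p+q−ℓ≤m}) ζ_ℓ ζ_{p+q−ℓ} / √(ℓ(p+q−ℓ)) for 1 ≤ p, q ≤ 2m−1. Then the maximum row ℓ¹-norm satisfies max_p ∑_q |A_{pq}| ≤ √(2 m (m+1)(1 + log m)) ‖ξ‖². -/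
open Finset Real

lemma Icc_int_succ (a b : ℤ) (h : a ≤ b+1) :
    Finset.Icc a (b+1) = insert (b+1) (Finset.Icc a b) := by
  ext x; simp only [Finset.mem_Icc, Finset.mem_insert]; omega

lemma gauss_Icc (n : ℕ) : ∑ l ∈ Finset.Icc (1:ℤ) (n:ℤ), (l:ℝ) = n*(n+1)/2 := by
  induction n with
  | zero => simp
  | succ k ih =>
    rw [show ((k+1:ℕ):ℤ) = (k:ℤ)+1 by push_cast; ring,
      Icc_int_succ 1 (k:ℤ) (by omega), Finset.sum_insert (by simp), ih]
    push_cast; ring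

lemma harm_Icc (n : ℕ) : ∑ l ∈ Finset.Icc (1:ℤ) (n:ℤ), (1:ℝ)/(l:ℝ) = (harmonic n : ℝ) := by
  induction n with
  | zero => simp
  | succ k ih =>
    rw [show ((k+1:ℕ):ℤ) = (k:ℤ)+1 by push_cast; ring,
      Icc_int_succ 1 (k:ℤ) (by omega), Finset.sum_insert (by simp), ih, harmonic_succ]
    push_cast; ring

theorem A_row_norm_bound (m : ℕ) (hm : 1 ≤ m) (ζ : ℤ → ℂ) (r : ℝ) (hr : 0 ≤ r)
    (hsum : ∑ l ∈ Finset.Icc (1 : ℤ) m, ‖ζ l‖ ^ 2 = r ^ 2)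
    (A : ℤ → ℤ → ℂ)
    (hA : ∀ p q : ℤ, A p q =
        ∑ l ∈ Finset.Icc (1 : ℤ) m, ∑ k ∈ Finset.Icc (1 : ℤ) l,
          (((if 1 ≤ p - k + 1 ∧ p - k + 1 ≤ p + q - l ∧ p + q - l ≤ (m : ℤ) then (1 : ℂ) else 0) +
              (if 1 ≤ q - k + 1 ∧ q - k + 1 ≤ p + q - l ∧ p + q - l ≤ (m : ℤ) then (1 : ℂ) else 0)) *
            ζ l * ζ (p + q - l) / (Real.sqrt ((l * (p + q - l) : ℤ)) : ℝ))) :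
    ∀ p ∈ Finset.Icc (1 : ℤ) (2 * (m : ℤ) - 1),
      ∑ q ∈ Finset.Icc (1 : ℤ) (2 * (m : ℤ) - 1), ‖A p q‖
        ≤ Real.sqrt (2 * m * (m + 1) * (1 + Real.log m)) * r ^ 2 := by
  intro p hp
  set a : ℤ → ℝ := fun l => ‖ζ l‖ with ha
  have ha0 : ∀ l, 0 ≤ a l := fun l => norm_nonneg _
  set M : Finset ℤ := Finset.Icc (1:ℤ) (m:ℤ) with hM
  set Q : Finset ℤ := Finset.Icc (1:ℤ) (2*(m:ℤ)-1) with hQ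
  set W : ℤ → ℤ → ℝ := fun l j =>
    if 1 ≤ j ∧ j ≤ (m:ℤ) then 2 * a l * a j / Real.sqrt (((l*j : ℤ) : ℝ)) else 0 with hW
  have hW0 : ∀ l j, 0 ≤ W l j := by
    intro l j; simp only [hW]; split_ifs with h
    · positivity
    · exact le_refl 0
  -- Step 1: pointwise bound on |A p q|
  have step1 : ∀ q : ℤ, ‖A p q‖ ≤ ∑ l ∈ M, (l:ℝ) * W l (p+q-l) := by
    intro q
    rw [hA]
    refine le_trans (norm_sum_le _ _) (Finset.sum_le_sum ?_)
    intro l hl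
    have hl1 : 1 ≤ l := (Finset.mem_Icc.mp hl).1
    refine le_trans (norm_sum_le _ _) ?_
    have hterm : ∀ k ∈ Finset.Icc (1:ℤ) l,
        ‖((if 1 ≤ p - k + 1 ∧ p - k + 1 ≤ p + q - l ∧ p + q - l ≤ (m : ℤ) then (1 : ℂ) else 0) +
              (if 1 ≤ q - k + 1 ∧ q - k + 1 ≤ p + q - l ∧ p + q - l ≤ (m : ℤ) then (1 : ℂ) else 0)) *
            ζ l * ζ (p + q - l) / (Real.sqrt ((l * (p + q - l) : ℤ)) : ℝ)‖ ≤ W l (p+q-l) := by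
      intro k hk
      rw [norm_div, norm_mul, norm_mul, Complex.norm_real, Real.norm_eq_abs, abs_of_nonneg (Real.sqrt_nonneg _)]
      by_cases hj : 1 ≤ p+q-l ∧ p+q-l ≤ (m:ℤ)
      · simp only [hW, if_pos hj]
        have habs : ‖(if 1 ≤ p - k + 1 ∧ p - k + 1 ≤ p + q - l ∧ p + q - l ≤ (m : ℤ) then (1 : ℂ) else 0) +
              (if 1 ≤ q - k + 1 ∧ q - k + 1 ≤ p + q - l ∧ p + q - l ≤ (m : ℤ) then (1 : ℂ) else 0)‖ ≤ 2 := by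
          refine le_trans (norm_add_le _ _) ?_
          have h1 : ‖if 1 ≤ p - k + 1 ∧ p - k + 1 ≤ p + q - l ∧ p + q - l ≤ (m : ℤ) then (1 : ℂ) else 0‖ ≤ 1 := by
            split_ifs <;> simp
          have h2 : ‖if 1 ≤ q - k + 1 ∧ q - k + 1 ≤ p + q - l ∧ p + q - l ≤ (m : ℤ) then (1 : ℂ) else 0‖ ≤ 1 := by
            split_ifs <;> simp
          linarith
        gcongr
      · have h1 : (if 1 ≤ p - k + 1 ∧ p - k + 1 ≤ p + q - l ∧ p + q - l ≤ (m : ℤ) then (1 : ℂ) else 0) = 0 :=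
          if_neg (fun h => hj ⟨le_trans h.1 h.2.1, h.2.2⟩)
        have h2 : (if 1 ≤ q - k + 1 ∧ q - k + 1 ≤ p + q - l ∧ p + q - l ≤ (m : ℤ) then (1 : ℂ) else 0) = 0 :=
          if_neg (fun h => hj ⟨le_trans h.1 h.2.1, h.2.2⟩)
        rw [h1, h2]
        simp only [add_zero, norm_zero, zero_mul, zero_div]
        exact hW0 l _
    refine le_trans (Finset.sum_le_sum hterm) ?_
    rw [Finset.sum_const, nsmul_eq_mul, Int.card_Icc]
    have : ((l + 1 - 1).toNat : ℝ) = (l : ℝ) := by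
      rw [show l + 1 - 1 = l by ring]
      exact_mod_cast congrArg (Int.cast : ℤ → ℝ) (Int.toNat_of_nonneg (by omega))
    rw [this]
  -- Step 3: per-l reindexing bound
  have step3 : ∀ l : ℤ, ∑ q ∈ Q, W l (p+q-l) ≤ ∑ j ∈ M, W l j := by
    intro l
    have hinj : ∑ q ∈ Q, W l (p+q-l) = ∑ j ∈ Q.image (fun q => p+q-l), W l j :=
      (Finset.sum_image (by intro x _ y _ h; have h' : p+x-l = p+y-l := h; omega)).symm
    rw [hinj]
    calc ∑ j ∈ Q.image (fun q => p+q-l), W l j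
        ≤ ∑ j ∈ Q.image (fun q => p+q-l) ∪ M, W l j :=
          Finset.sum_le_sum_of_subset_of_nonneg Finset.subset_union_left
            (fun j _ _ => hW0 l j)
      _ = ∑ j ∈ M, W l j := by
          refine (Finset.sum_subset Finset.subset_union_right ?_).symm
          intro x _ hx
          simp only [hM, Finset.mem_Icc] at hx
          exact if_neg (fun h => hx ⟨h.1, h.2⟩)
  -- combine steps 1-3
  have hmain : ∑ q ∈ Q, ‖A p q‖ ≤ ∑ l ∈ M, (l:ℝ) * ∑ j ∈ M, W l j := by
    refine le_trans (Finset.sum_le_sum (fun q _ => step1 q)) ?_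
    rw [Finset.sum_comm]
    refine Finset.sum_le_sum ?_
    intro l hl
    have hl1 : 1 ≤ l := (Finset.mem_Icc.mp hl).1
    rw [← Finset.mul_sum]
    have : (0:ℝ) ≤ (l:ℝ) := by exact_mod_cast (by omega : (0:ℤ) ≤ l)
    exact mul_le_mul_of_nonneg_left (step3 l) this
  -- Step 4: factorization
  set S1 : ℝ := ∑ l ∈ M, Real.sqrt (l:ℝ) * a l with hS1d
  set S2 : ℝ := ∑ j ∈ M, a j / Real.sqrt (j:ℝ) with hS2d
  have step4 : ∑ l ∈ M, (l:ℝ) * ∑ j ∈ M, W l j = 2 * S1 * S2 := by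
    have hterm : ∀ l ∈ M, (l:ℝ) * ∑ j ∈ M, W l j
        = (2 * (Real.sqrt (l:ℝ) * a l)) * S2 := by
      intro l hl
      have hl1 : (1:ℤ) ≤ l := (Finset.mem_Icc.mp hl).1
      have hl0 : (0:ℝ) < (l:ℝ) := by exact_mod_cast (by omega : (0:ℤ) < l)
      have hsl : (0:ℝ) < Real.sqrt (l:ℝ) := Real.sqrt_pos.mpr hl0
      rw [hS2d, Finset.mul_sum, Finset.mul_sum]
      refine Finset.sum_congr rfl ?_
      intro j hj
      have hj1 : (1:ℤ) ≤ j := (Finset.mem_Icc.mp hj).1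
      have hjm : j ≤ (m:ℤ) := (Finset.mem_Icc.mp hj).2
      have hj0 : (0:ℝ) < (j:ℝ) := by exact_mod_cast (by omega : (0:ℤ) < j)
      have hsj : (0:ℝ) < Real.sqrt (j:ℝ) := Real.sqrt_pos.mpr hj0
      have hcast : (((l*j : ℤ)) : ℝ) = (l:ℝ) * (j:ℝ) := by push_cast; ring
      have hll : Real.sqrt (l:ℝ) * Real.sqrt (l:ℝ) = (l:ℝ) := Real.mul_self_sqrt hl0.le
      simp only [hW]
      rw [if_pos (⟨hj1, hjm⟩ : 1 ≤ j ∧ j ≤ (m:ℤ)), hcast, Real.sqrt_mul hl0.le]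
      rw [show (l:ℝ) * (2 * a l * a j / (Real.sqrt (l:ℝ) * Real.sqrt (j:ℝ)))
          = (Real.sqrt (l:ℝ) * Real.sqrt (l:ℝ)) * (2 * a l * a j)
              / (Real.sqrt (l:ℝ) * Real.sqrt (j:ℝ)) by rw [hll]; ring]
      field_simp
    rw [Finset.sum_congr rfl hterm, ← Finset.sum_mul, ← Finset.mul_sum, ← hS1d]
  -- Step 5: Cauchy-Schwarz
  have hc1 : (0:ℝ) ≤ (m:ℝ)*((m:ℝ)+1)/2 := by positivity
  have hlog : (0:ℝ) ≤ Real.log m := Real.log_nonneg (by exact_mod_cast hm)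
  have hc2 : (0:ℝ) ≤ 1 + Real.log m := by linarith
  have hS1nn : 0 ≤ S1 := Finset.sum_nonneg (fun l _ => mul_nonneg (Real.sqrt_nonneg _) (ha0 l))
  have hS2nn : 0 ≤ S2 := Finset.sum_nonneg (fun j _ => div_nonneg (ha0 j) (Real.sqrt_nonneg _))
  have hsuma : ∑ l ∈ M, a l ^ 2 = r ^ 2 := hsum
  have hS1 : S1 ≤ Real.sqrt ((m:ℝ)*((m:ℝ)+1)/2) * r := by
    have cs := Finset.sum_mul_sq_le_sq_mul_sq M (fun l => Real.sqrt (l:ℝ)) a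
    have e1 : ∑ l ∈ M, Real.sqrt (l:ℝ)^2 = (m:ℝ)*((m:ℝ)+1)/2 := by
      rw [← gauss_Icc m]
      refine Finset.sum_congr rfl ?_
      intro l hl
      have hl1 : (1:ℤ) ≤ l := (Finset.mem_Icc.mp hl).1
      exact Real.sq_sqrt (by exact_mod_cast (by omega : (0:ℤ) ≤ l))
    rw [e1, hsuma] at cs
    have h2 : S1 ≤ Real.sqrt ((m:ℝ)*((m:ℝ)+1)/2 * r^2) := by
      rw [← Real.sqrt_sq hS1nn]
      exact Real.sqrt_le_sqrt cs
    rwa [Real.sqrt_mul hc1, Real.sqrt_sq hr] at h2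
  have hS2 : S2 ≤ Real.sqrt (1 + Real.log m) * r := by
    have cs := Finset.sum_mul_sq_le_sq_mul_sq M (fun j => 1 / Real.sqrt (j:ℝ)) a
    have e0 : S2 = ∑ j ∈ M, (1 / Real.sqrt (j:ℝ)) * a j := by
      rw [hS2d]
      refine Finset.sum_congr rfl ?_
      intro j _
      rw [one_div, inv_mul_eq_div]
    have e1 : ∑ j ∈ M, (1 / Real.sqrt (j:ℝ))^2 ≤ 1 + Real.log m := by
      have : ∑ j ∈ M, (1 / Real.sqrt (j:ℝ))^2 = ∑ j ∈ M, (1:ℝ)/(j:ℝ) := by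
        refine Finset.sum_congr rfl ?_
        intro j hj
        have hj1 : (1:ℤ) ≤ j := (Finset.mem_Icc.mp hj).1
        rw [div_pow, one_pow, Real.sq_sqrt (by exact_mod_cast (by omega : (0:ℤ) ≤ j))]
      rw [this, harm_Icc m]
      exact harmonic_le_one_add_log m
    rw [hsuma] at cs
    have h2 : S2^2 ≤ (1 + Real.log m) * r^2 := by
      rw [e0]
      refine le_trans cs ?_
      exact mul_le_mul_of_nonneg_right e1 (by positivity)
    have h3 : S2 ≤ Real.sqrt ((1 + Real.log m) * r^2) := by
      rw [← Real.sqrt_sq hS2nn]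
      exact Real.sqrt_le_sqrt h2
    rwa [Real.sqrt_mul hc2, Real.sqrt_sq hr] at h3
  have final : 2 * S1 * S2 ≤ Real.sqrt (2 * m * (m + 1) * (1 + Real.log m)) * r ^ 2 := by
    have h1 : 2 * S1 * S2 ≤ 2 * (Real.sqrt ((m:ℝ)*((m:ℝ)+1)/2) * r) * (Real.sqrt (1 + Real.log m) * r) := by
      have := mul_le_mul hS1 hS2 hS2nn (by positivity)
      nlinarith
    have key : Real.sqrt (2 * (m:ℝ) * ((m:ℝ) + 1) * (1 + Real.log m))
        = 2 * Real.sqrt ((m:ℝ)*((m:ℝ)+1)/2) * Real.sqrt (1 + Real.log m) := by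
      rw [show 2 * (m:ℝ) * ((m:ℝ) + 1) * (1 + Real.log m)
          = (2:ℝ)^2 * (((m:ℝ)*((m:ℝ)+1)/2) * (1 + Real.log m)) by ring,
        Real.sqrt_mul (by positivity), Real.sqrt_sq (by norm_num), Real.sqrt_mul hc1]
      ring
    refine le_trans h1 (le_of_eq ?_)
    rw [key]; ring
  calc ∑ q ∈ Q, ‖A p q‖ ≤ ∑ l ∈ M, (l:ℝ) * ∑ j ∈ M, W l j := hmain
    _ = 2 * S1 * S2 := step4
    _ ≤ _ := final
end
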